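/- Let h be a complex Gaussian vector in ℂ^M (so h ∼ 𝒞𝒩(0,(1/M)I_M)), and on the event h ≠ 0 let g = h/‖h‖₂ (so that g is uniformly distributed on the unit sphere of ℂ^M). Let F ⊆ ℤ_M be nonempty and Λ = F × ℤ_M. Then with probability at least 1 − e^{−M/2} − e^{−9M/32} − M·(e^{−2|F|} + e^{−|F|/8}), for every x ∈ ℂ^M: (|F|/8)·‖x‖₂² ≤ Σ_{(k,ℓ)∈Λ} |⟨x, π(k,ℓ)g⟩|² ≤ 20|F|·‖x‖₂². -/

import Mathlib

/-!
Letting the modulation parameter run over all of `ℤ_M`, Plancherel for the discrete Fourier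
transform turns the frame sum into `M ∑ₘ |x(m)|² ∑_{k ∈ F} |g(m - k)|²`. For `g = h / ‖h‖₂`
the frame bounds therefore follow from two-sided bounds on `‖h‖₂²` and on the local energies
`∑_{k ∈ F} |h(m - k)|²`. Each of these is a sum of `n` terms `|h(j)|²` (`n = M` or `|F|`),
i.e. of `2n` squares of independent real Gaussians of variance `1/(2M)`, so its moment
generating function is `(1 - t/M)⁻ⁿ`; Chernoff's bound gives four exponential tail estimates,
and a union bound over the `M` positions `m` finishes the proof.
-/

open MeasureTheory ProbabilityTheory Complex Finset
open scoped Real BigOperators Classical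

noncomputable section

/-- Time–frequency shift `π(k,ℓ) g = M_ℓ T_k g`. -/
def tfShift (M : ℕ) (k l : ZMod M) (g : ZMod M → ℂ) : ZMod M → ℂ :=
  fun m => Complex.exp (2 * (Real.pi : ℂ) * Complex.I * (l.val : ℂ) * (m.val : ℂ) / (M : ℂ)) *
    g (m - k)

/-- Squared ℓ²-norm on ℂ^M. -/
def nsq (M : ℕ) [NeZero M] (x : ZMod M → ℂ) : ℝ :=
  ∑ m : ZMod M, ‖x m‖ ^ 2

/-- Inner product ⟨x,y⟩ = ∑ x(m)·conj(y(m)). -/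
def inn (M : ℕ) [NeZero M] (x y : ZMod M → ℂ) : ℂ :=
  ∑ m : ZMod M, x m * (starRingEnd ℂ) (y m)

/-- Frame operator Φ_Λ Φ_Λ^* of the Gabor system (g, Λ). -/
def frameOp (M : ℕ) [NeZero M] (Λ : Finset (ZMod M × ZMod M)) (g : ZMod M → ℂ) :
    Matrix (ZMod M) (ZMod M) ℂ :=
  fun m1 m2 => ∑ kl ∈ Λ,
    tfShift M kl.1 kl.2 g m1 * (starRingEnd ℂ) (tfShift M kl.1 kl.2 g m2)

/-- A Steinhaus window: g(m) = M^{-1/2} e^{2πi y_m} with y_m i.i.d. uniform on [0,1). -/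
def IsSteinhaus (M : ℕ) {Ω : Type*} [MeasurableSpace Ω] (P : Measure Ω)
    (g : Ω → ZMod M → ℂ) : Prop :=
  ∃ y : ZMod M → Ω → ℝ,
    (∀ m, Measurable (y m)) ∧
    iIndepFun y P ∧
    (∀ m, Measure.map (y m) P = volume.restrict (Set.Ico (0 : ℝ) 1)) ∧
    (∀ ω m, g ω m = (1 / Real.sqrt M : ℝ) *
      Complex.exp (2 * (Real.pi : ℂ) * Complex.I * (y m ω)))

/-- A complex Gaussian window g ~ CN(0, (1/M) I_M): the 2M real coordinates are
independent centered Gaussians of variance 1/(2M). -/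
def IsGaussianWindow (M : ℕ) {Ω : Type*} [MeasurableSpace Ω] (P : Measure Ω)
    (g : Ω → ZMod M → ℂ) : Prop :=
  ∃ u : ZMod M × Bool → Ω → ℝ,
    (∀ i, Measurable (u i)) ∧
    iIndepFun u P ∧
    (∀ i, Measure.map (u i) P = gaussianReal 0 (1 / (2 * M) : NNReal)) ∧
    (∀ ω m, g ω m = (u (m, false) ω : ℂ) + (u (m, true) ω : ℂ) * Complex.I)

open scoped NNReal ZMod

lemma ZMod.conj_stdAddChar {N : ℕ} [NeZero N] (j : ZMod N) :
    starRingEnd ℂ (ZMod.stdAddChar j) = ZMod.stdAddChar (-j) := by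
  rw [AddChar.starComp_apply (by rw [ZMod.ringChar_zmod_n]; exact Nat.pos_of_neZero N),
    AddChar.inv_apply]

theorem ZMod.sum_norm_sq_dft {N : ℕ} [NeZero N] (Φ : ZMod N → ℂ) :
    ∑ k, ‖𝓕 Φ k‖ ^ 2 = N * ∑ j, ‖Φ j‖ ^ 2 := by
  have hconj (k : ZMod N) :
      starRingEnd ℂ (𝓕 Φ k) = ∑ j, ZMod.stdAddChar (j * k) * starRingEnd ℂ (Φ j) := by
    simp only [ZMod.dft_apply, smul_eq_mul, map_sum, map_mul, ZMod.conj_stdAddChar, neg_neg]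
  apply Complex.ofReal_injective
  push_cast
  calc ∑ k, (‖𝓕 Φ k‖ : ℂ) ^ 2
      = ∑ j, starRingEnd ℂ (Φ j) * 𝓕 (𝓕 Φ) (-j) := by
        simp only [ZMod.dft_apply (𝓕 Φ), ← mul_conj', hconj, Finset.mul_sum, smul_eq_mul,
          mul_neg, neg_neg]
        rw [Finset.sum_comm]
        refine Finset.sum_congr rfl fun j _ => Finset.sum_congr rfl fun k _ => ?_
        rw [mul_comm j k]
        ring
    _ = ∑ j, starRingEnd ℂ (Φ j) * (N * Φ j) := by
        simp only [ZMod.dft_dft, neg_neg, smul_eq_mul]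
    _ = N * ∑ j, (‖Φ j‖ : ℂ) ^ 2 := by
        simp only [Finset.mul_sum, ← mul_conj']
        exact Finset.sum_congr rfl fun j _ => by ring

lemma tfShift_apply (M : ℕ) [NeZero M] (k l : ZMod M) (g : ZMod M → ℂ) (m : ZMod M) :
    tfShift M k l g m = ZMod.stdAddChar (l * m) * g (m - k) := by
  have hlm : l * m = ((l.val * m.val : ℕ) : ℤ) := by simp
  rw [tfShift, hlm, ZMod.stdAddChar_coe]
  push_cast
  ring_nf

lemma inn_tfShift (M : ℕ) [NeZero M] (x g : ZMod M → ℂ) (k l : ZMod M) :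
    inn M x (tfShift M k l g) = 𝓕 (fun m => x m * starRingEnd ℂ (g (m - k))) l := by
  simp only [inn, tfShift_apply, ZMod.dft_apply, map_mul, ZMod.conj_stdAddChar, smul_eq_mul]
  exact Finset.sum_congr rfl fun m _ => by ring_nf

lemma sum_norm_sq_inn_tfShift (M : ℕ) [NeZero M] (x g : ZMod M → ℂ) (k : ZMod M) :
    ∑ l, ‖inn M x (tfShift M k l g)‖ ^ 2 = M * ∑ m, ‖x m‖ ^ 2 * ‖g (m - k)‖ ^ 2 := by
  simp only [inn_tfShift, ZMod.sum_norm_sq_dft, norm_mul, Complex.norm_conj, mul_pow]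

def localEnergy (M : ℕ) (F : Finset (ZMod M)) (g : ZMod M → ℂ) (m : ZMod M) : ℝ :=
  ∑ k ∈ F, ‖g (m - k)‖ ^ 2

lemma localEnergy_eq_sum_map {M : ℕ} (F : Finset (ZMod M)) (g : ZMod M → ℂ) (m : ZMod M) :
    localEnergy M F g m = ∑ j ∈ F.map (Equiv.subLeft m).toEmbedding, ‖g j‖ ^ 2 := by
  rw [localEnergy, Finset.sum_map]
  rfl

section FrameBounds

variable {M : ℕ} (F : Finset (ZMod M))

lemma localEnergy_div_ofReal (g : ZMod M → ℂ) (r : ℝ) (m : ZMod M) :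
    localEnergy M F (fun j => g j / (r : ℂ)) m = localEnergy M F g m / r ^ 2 := by
  simp only [localEnergy, norm_div, Complex.norm_real, Real.norm_eq_abs, div_pow, sq_abs,
    Finset.sum_div]

variable [NeZero M]

lemma sum_product_univ_norm_sq_inn_tfShift (x g : ZMod M → ℂ) :
    ∑ kl ∈ F ×ˢ (Finset.univ : Finset (ZMod M)), ‖inn M x (tfShift M kl.1 kl.2 g)‖ ^ 2 =
      M * ∑ m, ‖x m‖ ^ 2 * localEnergy M F g m := by
  simp only [Finset.sum_product, sum_norm_sq_inn_tfShift, localEnergy, Finset.mul_sum]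
  exact Finset.sum_comm

lemma frame_bounds_of_localEnergy {g : ZMod M → ℂ} {A B : ℝ}
    (hA : ∀ m, A ≤ M * localEnergy M F g m) (hB : ∀ m, M * localEnergy M F g m ≤ B)
    (x : ZMod M → ℂ) :
    A * nsq M x ≤
        ∑ kl ∈ F ×ˢ (Finset.univ : Finset (ZMod M)), ‖inn M x (tfShift M kl.1 kl.2 g)‖ ^ 2 ∧
      ∑ kl ∈ F ×ˢ (Finset.univ : Finset (ZMod M)), ‖inn M x (tfShift M kl.1 kl.2 g)‖ ^ 2 ≤
        B * nsq M x := by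
  simp only [sum_product_univ_norm_sq_inn_tfShift, nsq, Finset.mul_sum]
  constructor <;> refine Finset.sum_le_sum fun m _ => ?_
  · nlinarith [hA m, sq_nonneg ‖x m‖]
  · nlinarith [hB m, sq_nonneg ‖x m‖]

lemma frame_bounds_of_nsq_of_localEnergy (h : ZMod M → ℂ)
    (hN : 1 / 4 < nsq M h) (hN' : nsq M h < 2)
    (hL : ∀ m, (F.card : ℝ) / (2 * M) < localEnergy M F h m)
    (hL' : ∀ m, localEnergy M F h m < 5 * F.card / M) (x : ZMod M → ℂ) :
    (F.card : ℝ) / 8 * nsq M x ≤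
        ∑ kl ∈ F ×ˢ (Finset.univ : Finset (ZMod M)),
          ‖inn M x (tfShift M kl.1 kl.2 (fun m => h m / (Real.sqrt (nsq M h) : ℂ)))‖ ^ 2 ∧
      ∑ kl ∈ F ×ˢ (Finset.univ : Finset (ZMod M)),
          ‖inn M x (tfShift M kl.1 kl.2 (fun m => h m / (Real.sqrt (nsq M h) : ℂ)))‖ ^ 2 ≤
        20 * (F.card : ℝ) * nsq M x := by
  have hM : (0 : ℝ) < M := Nat.cast_pos.mpr (Nat.pos_of_neZero M)
  have hN0 : 0 < nsq M h := by linarith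
  apply frame_bounds_of_localEnergy <;> intro m <;>
    rw [localEnergy_div_ofReal, Real.sq_sqrt hN0.le, mul_div_assoc']
  · rw [le_div_iff₀ hN0]
    have := (div_lt_iff₀ (by positivity)).mp (hL m)
    nlinarith
  · rw [div_le_iff₀ hN0]
    have := (lt_div_iff₀ hM).mp (hL' m)
    nlinarith

end FrameBounds

section GaussianSquares

variable {v : ℝ≥0} {t : ℝ}

lemma mgf_sq_gaussianReal (hv : v ≠ 0) (ht : 2 * v * t < 1) :
    mgf (fun x => x ^ 2) (gaussianReal 0 v) t = (√(1 - 2 * v * t))⁻¹ := by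
  have hv0 : (0 : ℝ) < v := NNReal.coe_pos.mpr (pos_iff_ne_zero.mpr hv)
  set b : ℝ := (1 - 2 * v * t) / (2 * v) with hb
  have hb0 : 0 < b := div_pos (by linarith) (by positivity)
  have hpdf (x : ℝ) : gaussianPDFReal 0 v x • Real.exp (t * x ^ 2)
      = (√(2 * π * v))⁻¹ * Real.exp (-b * x ^ 2) := by
    rw [gaussianPDFReal, smul_eq_mul, mul_assoc, ← Real.exp_add, hb]
    congr 2
    field_simp
    ring
  rw [mgf, integral_gaussianReal_eq_integral_smul hv]
  simp only [hpdf, integral_const_mul, integral_gaussian]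
  rw [← Real.sqrt_inv, ← Real.sqrt_mul (by positivity), ← Real.sqrt_inv, hb]
  congr 1
  field_simp

variable {Ω ι : Type*} [MeasurableSpace Ω] {P : Measure Ω}

lemma mgf_sq_of_map_eq_gaussianReal {X : Ω → ℝ} (hX : Measurable X)
    (hlaw : P.map X = gaussianReal 0 v) (hv : v ≠ 0) (ht : 2 * v * t < 1) :
    mgf (fun ω => X ω ^ 2) P t = (√(1 - 2 * v * t))⁻¹ := by
  rw [← mgf_sq_gaussianReal hv ht, ← hlaw, mgf_map hX.aemeasurable (by fun_prop)]
  rfl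

lemma mgf_sum_sq_of_iIndepFun_gaussianReal {u : ι → Ω → ℝ} (hu : ∀ i, Measurable (u i))
    (hind : iIndepFun u P) (hlaw : ∀ i, P.map (u i) = gaussianReal 0 v) (hv : v ≠ 0)
    (ht : 2 * v * t < 1) (s : Finset ι) :
    mgf (fun ω => ∑ i ∈ s, u i ω ^ 2) P t = (√(1 - 2 * v * t))⁻¹ ^ s.card := by
  have hind_sq : iIndepFun (fun i ω => u i ω ^ 2) P :=
    hind.comp (fun _ x => x ^ 2) fun _ => measurable_id.pow_const 2
  rw [← Finset.sum_fn, hind_sq.mgf_sum (fun i => (hu i).pow_const 2),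
    Finset.prod_congr rfl fun i _ => mgf_sq_of_map_eq_gaussianReal (hu i) (hlaw i) hv ht,
    Finset.prod_const]

end GaussianSquares

namespace Real

lemma exp_mul_mul_pow_le_exp {a c r : ℝ} (n : ℕ) (hc₀ : 0 ≤ c) (hc : c ≤ Real.exp (-(a + r))) :
    Real.exp (a * n) * c ^ n ≤ Real.exp (-r * n) := by
  calc Real.exp (a * n) * c ^ n ≤ Real.exp (a * n) * Real.exp (-(a + r)) ^ n := by gcongr
    _ = Real.exp (-r * n) := by rw [← Real.exp_nat_mul, ← Real.exp_add]; ring_nf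

lemma exp_five_div_eight_le_two : Real.exp (5 / 8) ≤ 2 := by
  rw [← Real.le_log_iff_exp_le two_pos]
  linarith [Real.log_two_gt_d9]

end Real

namespace IsGaussianWindow

variable {M : ℕ} [NeZero M] {Ω : Type*} [MeasurableSpace Ω] {P : Measure Ω}
  {h : Ω → ZMod M → ℂ}

lemma mgf_sum_norm_sq (hh : IsGaussianWindow M P h) (S : Finset (ZMod M)) {t : ℝ}
    (ht : t < M) :
    mgf (fun ω => ∑ j ∈ S, ‖h ω j‖ ^ 2) P t = (1 - t / M)⁻¹ ^ S.card := by
  obtain ⟨u, hu, hind, hlaw, hhu⟩ := hh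
  have hM : (0 : ℝ) < M := Nat.cast_pos.mpr (Nat.pos_of_neZero M)
  have hv : ((1 / (2 * M) : ℝ≥0) : ℝ) = 1 / (2 * M) := by push_cast; ring
  have hvt : 2 * ((1 / (2 * M) : ℝ≥0) : ℝ) * t = t / M := by rw [hv]; field_simp
  have hsum (ω : Ω) : ∑ j ∈ S, ‖h ω j‖ ^ 2 = ∑ i ∈ S ×ˢ (Finset.univ : Finset Bool), u i ω ^ 2 := by
    simp only [hhu, Finset.sum_product, Complex.sq_norm, Complex.normSq_add_mul_I,
      Fintype.sum_bool, add_comm]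
  simp only [hsum]
  rw [mgf_sum_sq_of_iIndepFun_gaussianReal hu hind hlaw (by simp [NeZero.ne M])
      (by rw [hvt, div_lt_one hM]; exact ht),
    hvt, Finset.card_product, Finset.card_univ, Fintype.card_bool, mul_comm, pow_mul, inv_pow,
    Real.sq_sqrt (by rw [sub_nonneg, div_le_one hM]; exact ht.le)]

variable [IsProbabilityMeasure P]

lemma integrable_exp_mul_sum_norm_sq (hh : IsGaussianWindow M P h) (S : Finset (ZMod M))
    {t : ℝ} (ht : t < M) :
    Integrable (fun ω => Real.exp (t * ∑ j ∈ S, ‖h ω j‖ ^ 2)) P := by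
  have hM : (0 : ℝ) < M := Nat.cast_pos.mpr (Nat.pos_of_neZero M)
  rw [← mgf_pos_iff, hh.mgf_sum_norm_sq S ht]
  have : 0 < 1 - t / M := by rw [sub_pos, div_lt_one hM]; exact ht
  positivity

lemma measureReal_sum_norm_sq_ge_le (hh : IsGaussianWindow M P h) (S : Finset (ZMod M))
    (ε : ℝ) {t : ℝ} (ht₀ : 0 ≤ t) (ht : t < M) :
    P.real {ω | ε ≤ ∑ j ∈ S, ‖h ω j‖ ^ 2} ≤ Real.exp (-t * ε) * (1 - t / M)⁻¹ ^ S.card := by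
  rw [← hh.mgf_sum_norm_sq S ht]
  exact measure_ge_le_exp_mul_mgf ε ht₀ (hh.integrable_exp_mul_sum_norm_sq S ht)

lemma measureReal_sum_norm_sq_le_le (hh : IsGaussianWindow M P h) (S : Finset (ZMod M))
    (ε : ℝ) {t : ℝ} (ht₀ : t ≤ 0) :
    P.real {ω | ∑ j ∈ S, ‖h ω j‖ ^ 2 ≤ ε} ≤ Real.exp (-t * ε) * (1 - t / M)⁻¹ ^ S.card := by
  have ht : t < M := ht₀.trans_lt (Nat.cast_pos.mpr (Nat.pos_of_neZero M))
  rw [← hh.mgf_sum_norm_sq S ht]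
  exact measure_le_le_exp_mul_mgf ε ht₀ (hh.integrable_exp_mul_sum_norm_sq S ht)

lemma measureReal_nsq_le_le (hh : IsGaussianWindow M P h) :
    P.real {ω | nsq M (h ω) ≤ 1 / 4} ≤ Real.exp (-(M : ℝ) / 2) := by
  have hM : (0 : ℝ) < M := Nat.cast_pos.mpr (Nat.pos_of_neZero M)
  have h4 : Real.exp (5 / 4) ≤ 4 := by
    rw [show (5 / 4 : ℝ) = 5 / 8 + 5 / 8 by norm_num, Real.exp_add]
    nlinarith [Real.exp_five_div_eight_le_two, Real.exp_pos (5 / 8)]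
  calc P.real {ω | nsq M (h ω) ≤ 1 / 4}
      ≤ Real.exp (-(-3 * M) * (1 / 4)) * (1 - -3 * (M : ℝ) / M)⁻¹ ^
          (Finset.univ : Finset (ZMod M)).card :=
        hh.measureReal_sum_norm_sq_le_le _ _ (by linarith)
    _ = Real.exp (3 / 4 * M) * 4⁻¹ ^ M := by
        rw [Finset.card_univ, ZMod.card, mul_div_cancel_right₀ _ hM.ne']
        norm_num
        ring_nf
    _ ≤ Real.exp (-(1 / 2) * M) := by
        refine Real.exp_mul_mul_pow_le_exp M (by norm_num) ?_
        rw [show -(3 / 4 + 1 / 2 : ℝ) = -(5 / 4) by norm_num, Real.exp_neg]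
        exact inv_anti₀ (Real.exp_pos _) h4
    _ = Real.exp (-(M : ℝ) / 2) := by ring_nf

lemma measureReal_two_le_nsq_le (hh : IsGaussianWindow M P h) :
    P.real {ω | 2 ≤ nsq M (h ω)} ≤ Real.exp (-9 * (M : ℝ) / 32) := by
  have hM : (0 : ℝ) < M := Nat.cast_pos.mpr (Nat.pos_of_neZero M)
  calc P.real {ω | 2 ≤ nsq M (h ω)}
      ≤ Real.exp (-(M / 2) * 2) * (1 - (M : ℝ) / 2 / M)⁻¹ ^
          (Finset.univ : Finset (ZMod M)).card :=
        hh.measureReal_sum_norm_sq_ge_le _ _ (by positivity) (by linarith)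
    _ = Real.exp (-1 * M) * 2 ^ M := by
        rw [Finset.card_univ, ZMod.card, div_div_cancel_left' hM.ne']
        norm_num
    _ ≤ Real.exp (-(9 / 32) * M) := by
        refine Real.exp_mul_mul_pow_le_exp M (by norm_num) ?_
        rw [← Real.log_le_iff_le_exp two_pos]
        linarith [Real.log_two_lt_d9]
    _ = Real.exp (-9 * (M : ℝ) / 32) := by ring_nf

lemma measureReal_localEnergy_le_le (hh : IsGaussianWindow M P h) (F : Finset (ZMod M))
    (m : ZMod M) :
    P.real {ω | localEnergy M F (h ω) m ≤ F.card / (2 * M)} ≤ Real.exp (-(F.card : ℝ) / 8) := by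
  have hM : (0 : ℝ) < M := Nat.cast_pos.mpr (Nat.pos_of_neZero M)
  simp only [localEnergy_eq_sum_map]
  calc P.real {ω | ∑ j ∈ F.map (Equiv.subLeft m).toEmbedding, ‖h ω j‖ ^ 2 ≤ F.card / (2 * M)}
      ≤ Real.exp (-(-M) * (F.card / (2 * M))) * (1 - -(M : ℝ) / M)⁻¹ ^
          (F.map (Equiv.subLeft m).toEmbedding).card :=
        hh.measureReal_sum_norm_sq_le_le _ _ (by linarith)
    _ = Real.exp (1 / 2 * F.card) * 2⁻¹ ^ F.card := by
        rw [Finset.card_map, neg_div, div_self hM.ne']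
        field_simp
        norm_num
    _ ≤ Real.exp (-(1 / 8) * F.card) := by
        refine Real.exp_mul_mul_pow_le_exp F.card (by norm_num) ?_
        rw [show -(1 / 2 + 1 / 8 : ℝ) = -(5 / 8) by norm_num, Real.exp_neg]
        exact inv_anti₀ (Real.exp_pos _) Real.exp_five_div_eight_le_two
    _ = Real.exp (-(F.card : ℝ) / 8) := by ring_nf

lemma measureReal_le_localEnergy_le (hh : IsGaussianWindow M P h) (F : Finset (ZMod M))
    (m : ZMod M) :
    P.real {ω | 5 * F.card / M ≤ localEnergy M F (h ω) m} ≤ Real.exp (-2 * F.card) := by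
  have hM : (0 : ℝ) < M := Nat.cast_pos.mpr (Nat.pos_of_neZero M)
  simp only [localEnergy_eq_sum_map]
  calc P.real {ω | 5 * F.card / M ≤ ∑ j ∈ F.map (Equiv.subLeft m).toEmbedding, ‖h ω j‖ ^ 2}
      ≤ Real.exp (-(4 / 5 * M) * (5 * F.card / M)) * (1 - 4 / 5 * (M : ℝ) / M)⁻¹ ^
          (F.map (Equiv.subLeft m).toEmbedding).card :=
        hh.measureReal_sum_norm_sq_ge_le _ _ (by positivity) (by linarith)
    _ = Real.exp (-4 * F.card) * 5 ^ F.card := by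
        rw [Finset.card_map, mul_div_cancel_right₀ _ hM.ne']
        field_simp
        norm_num
    _ ≤ Real.exp (-2 * F.card) := by
        refine Real.exp_mul_mul_pow_le_exp F.card (by norm_num) ?_
        have := Real.quadratic_le_exp_of_nonneg (x := 2) (by norm_num)
        norm_num at this ⊢
        linarith

end IsGaussianWindow

theorem stmt15_general (M : ℕ) [NeZero M] {Ω : Type*} [MeasurableSpace Ω] (P : Measure Ω)
    [IsProbabilityMeasure P] (h : Ω → ZMod M → ℂ) (hh : IsGaussianWindow M P h)
    (F : Finset (ZMod M)) :
    P {ω | h ω ≠ 0 ∧ ∀ x : ZMod M → ℂ,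
        (F.card : ℝ) / 8 * nsq M x ≤
            ∑ kl ∈ F ×ˢ (Finset.univ : Finset (ZMod M)),
              ‖inn M x (tfShift M kl.1 kl.2
                (fun m => h ω m / (Real.sqrt (nsq M (h ω)) : ℂ)))‖ ^ 2 ∧
          ∑ kl ∈ F ×ˢ (Finset.univ : Finset (ZMod M)),
              ‖inn M x (tfShift M kl.1 kl.2
                (fun m => h ω m / (Real.sqrt (nsq M (h ω)) : ℂ)))‖ ^ 2 ≤
            20 * (F.card : ℝ) * nsq M x} ≥
      ENNReal.ofReal
        (1 - Real.exp (-(M : ℝ) / 2) - Real.exp (-9 * (M : ℝ) / 32) -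
          (M : ℝ) * (Real.exp (-2 * F.card) + Real.exp (-(F.card : ℝ) / 8))) := by
  set Bad : Set Ω := {ω | nsq M (h ω) ≤ 1 / 4} ∪ {ω | 2 ≤ nsq M (h ω)} ∪
    ⋃ m, ({ω | localEnergy M F (h ω) m ≤ F.card / (2 * M)} ∪
      {ω | 5 * F.card / M ≤ localEnergy M F (h ω) m})
  refine (measure_mono (μ := P) (s := Badᶜ) fun ω hω => ?_).trans' ?_
  · simp only [Bad, Set.mem_compl_iff, Set.mem_union, Set.mem_iUnion, Set.mem_ofPred_eq, not_or,
      not_exists, not_le] at hω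
    obtain ⟨⟨hN, hN'⟩, hL⟩ := hω
    refine ⟨fun h0 => ?_, frame_bounds_of_nsq_of_localEnergy F (h ω) hN hN'
      (fun m => (hL m).1) (fun m => (hL m).2)⟩
    norm_num [h0, nsq] at hN
  have hBad : P.real Bad ≤ Real.exp (-(M : ℝ) / 2) + Real.exp (-9 * (M : ℝ) / 32) +
      M * (Real.exp (-2 * F.card) + Real.exp (-(F.card : ℝ) / 8)) := by
    refine (measureReal_union_le _ _).trans (add_le_add ((measureReal_union_le _ _).trans
      (add_le_add hh.measureReal_nsq_le_le hh.measureReal_two_le_nsq_le)) ?_)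
    calc P.real (⋃ m, _)
        ≤ ∑ m : ZMod M, (Real.exp (-2 * F.card) + Real.exp (-(F.card : ℝ) / 8)) :=
          (measureReal_iUnion_fintype_le _).trans <| Finset.sum_le_sum fun m _ =>
            (measureReal_union_le _ _).trans <| (add_comm _ _).trans_le <| add_le_add
              (hh.measureReal_le_localEnergy_le F m) (hh.measureReal_localEnergy_le_le F m)
      _ = M * (Real.exp (-2 * F.card) + Real.exp (-(F.card : ℝ) / 8)) := by
          rw [Finset.sum_const, Finset.card_univ, ZMod.card, nsmul_eq_mul]
  have hcompl : 1 ≤ P.real Bad + P.real Badᶜ := by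
    simpa [Set.union_compl_self] using measureReal_union_le (μ := P) Bad Badᶜ
  rw [← ofReal_measureReal]
  exact ENNReal.ofReal_le_ofReal (by linarith)

/-- For a window g = h/‖h‖₂ uniformly distributed on the sphere (h complex Gaussian)
and Λ = F × ℤ_M, with probability at least
1 − e^{−M/2} − e^{−9M/32} − M(e^{−2|F|} + e^{−|F|/8}) the frame bounds |F|/8 and 20|F| hold. -/
theorem stmt15 (M : ℕ) [NeZero M] {Ω : Type*} [MeasurableSpace Ω] (P : Measure Ω)
    [IsProbabilityMeasure P] (h : Ω → ZMod M → ℂ) (hh : IsGaussianWindow M P h)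
    (F : Finset (ZMod M)) (hF : F.Nonempty) :
    P {ω | h ω ≠ 0 ∧ ∀ x : ZMod M → ℂ,
        (F.card : ℝ) / 8 * nsq M x ≤
            ∑ kl ∈ F ×ˢ (Finset.univ : Finset (ZMod M)),
              ‖inn M x (tfShift M kl.1 kl.2
                (fun m => h ω m / (Real.sqrt (nsq M (h ω)) : ℂ)))‖ ^ 2 ∧
          ∑ kl ∈ F ×ˢ (Finset.univ : Finset (ZMod M)),
              ‖inn M x (tfShift M kl.1 kl.2
                (fun m => h ω m / (Real.sqrt (nsq M (h ω)) : ℂ)))‖ ^ 2 ≤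
            20 * (F.card : ℝ) * nsq M x} ≥
      ENNReal.ofReal
        (1 - Real.exp (-(M : ℝ) / 2) - Real.exp (-9 * (M : ℝ) / 32) -
          (M : ℝ) * (Real.exp (-2 * F.card) + Real.exp (-(F.card : ℝ) / 8))) :=
  stmt15_general M P h hh F
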